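/- arXiv:1403.3517 — 2 statements merged into one kernel-verified Lean document; each statement's English description precedes it below -/
import Mathlib

section
/- (Proposition 3, part 3) Assume r > m and β ≤ cIS, and set S1 = (r − m)/cSS. Then every solution of the reduced system with S(0) ≥ 0, I(0) ≥ 0 and (S(0), I(0)) ≠ (0, 0) converges to the disease-free equilibrium (S1, 0) as t → ∞; moreover the reduced system has no equilibrium with S > 0 and I > 0. -/
open Filter Topology

/-- `(S, I)` is a solution of the reduced system on `[0, ∞)`. -/
def IsSol (r m β γ μ cSS cSI cIS cII a : ℝ) (S I : ℝ → ℝ) : Prop :=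
  ∀ t : ℝ, 0 ≤ t →
    HasDerivAt S (r * S t + a * r * I t - m * S t
      - (cSS * S t + cSI * I t) * S t - β * S t * I t + γ * I t) t ∧
    HasDerivAt I (-(m * I t) - (cIS * S t + cII * I t) * I t
      + β * S t * I t - γ * I t - μ * I t) t

/-- `(s, i)` is an equilibrium point of the reduced system. -/
def IsEquilibrium (r m β γ μ cSS cSI cIS cII a : ℝ) (s i : ℝ) : Prop :=
  r * s + a * r * i - m * s - (cSS * s + cSI * i) * s - β * s * i + γ * i = 0 ∧
  -(m * i) - (cIS * s + cII * i) * i + β * s * i - γ * i - μ * i = 0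

/-- All parameters are positive and `a ∈ (0, 1)`. -/
def ParamsPos (r m β γ μ cSS cSI cIS cII a : ℝ) : Prop :=
  0 < r ∧ 0 < m ∧ 0 < β ∧ 0 < γ ∧ 0 < μ ∧
    0 < cSS ∧ 0 < cSI ∧ 0 < cIS ∧ 0 < cII ∧ 0 < a ∧ a < 1

/-!
With `β ≤ cIS` the infected class satisfies `I' = I ((β - cIS) S - cII I - (m + γ + μ))`, whose
per-capita rate is at most `-(m + γ + μ)` as long as `S, I ≥ 0`; integrating factors show that
both stay nonnegative (and `S` becomes positive), hence `I → 0`. Once `I` is small, `S` follows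
a perturbed logistic equation with carrying capacity `S₁ = (r - m) / cSS`: above any `B > S₁`
its derivative is bounded by a negative constant, and below any `A < S₁` so is the derivative
of `-log S`. A barrier argument turns each of these into an eventual bound, so `S → S₁`. At an
equilibrium the same rate must vanish, which is impossible when `i > 0`.
-/

open Set Real

theorem eventually_le_of_hasDerivAt_le_neg {f f' : ℝ → ℝ} {T B κ : ℝ} (hκ : 0 < κ)
    (hf : ∀ t, T ≤ t → HasDerivAt f (f' t) t) (hf' : ∀ t, T ≤ t → B ≤ f t → f' t ≤ -κ) :
    ∀ᶠ t in atTop, f t ≤ B := by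
  have hcont : ∀ t₀ t, T ≤ t₀ → ContinuousOn f (Icc t₀ t) := fun t₀ t h₀ x hx =>
    (hf x (h₀.trans hx.1)).continuousAt.continuousWithinAt
  have hright : ∀ t₀ t, T ≤ t₀ → ∀ x ∈ Ico t₀ t, HasDerivWithinAt f (f' x) (Ici x) x :=
    fun t₀ t h₀ x hx => (hf x (h₀.trans hx.1)).hasDerivWithinAt
  obtain ⟨t₁, hTt₁, ht₁⟩ : ∃ t₁, T ≤ t₁ ∧ f t₁ ≤ B := by
    by_contra! habove
    -- above `B`, `f` decreases at rate at least `κ`, so it reaches `B` by time `t`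
    set t := T + (f T - B) / κ
    have hTt : T ≤ t :=
      le_add_of_nonneg_right (div_nonneg (sub_nonneg.2 (habove T le_rfl).le) hκ.le)
    have hdecay := image_le_of_deriv_right_le_deriv_boundary (hcont T t le_rfl)
      (hright T t le_rfl) (B := fun x => f T - κ * (x - T)) (B' := fun _ => -κ) (by simp)
      (by fun_prop)
      (fun x _ => by simpa using ((((hasDerivAt_id x).sub_const T).const_mul κ).const_sub
        (f T)).hasDerivWithinAt)
      (fun x hx => hf' x hx.1 (habove x hx.1).le) ⟨hTt, le_rfl⟩
    have : f T - κ * (t - T) = B := by simp only [t]; field_simp; ring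
    linarith [habove t hTt]
  filter_upwards [eventually_ge_atTop t₁] with t ht
  exact image_le_of_deriv_right_lt_deriv_boundary (hcont t₁ t hTt₁) (hright t₁ t hTt₁)
    (B := fun _ => B) ht₁ (fun x => hasDerivAt_const x B)
    (fun x hx hfx => (hf' x (hTt₁.trans hx.1) hfx.ge).trans_lt (neg_neg_iff_pos.2 hκ))
    ⟨ht, le_rfl⟩

theorem mul_exp_integral_le_of_hasDerivAt {f g q : ℝ → ℝ} {a : ℝ} (hg : ContinuousOn g (Ici a))
    (hf : ∀ t, a ≤ t → HasDerivAt f (g t * f t + q t) t) (hq : ∀ t, a ≤ t → 0 ≤ q t)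
    {t : ℝ} (ht : a ≤ t) : f a * exp (∫ s in a..t, g s) ≤ f t := by
  set G : ℝ → ℝ := fun x => ∫ s in a..x, g (max s a)
  have hG : ∀ x, HasDerivAt G (g (max x a)) x := fun x =>
    ((hg.comp_continuous (by fun_prop) fun s => le_max_right s a).integral_hasStrictDerivAt
      a x).hasDerivAt
  have hGt : G t = ∫ s in a..t, g s := intervalIntegral.integral_congr fun s hs => by
    rw [uIcc_of_le ht] at hs
    simp [max_eq_left hs.1]
  -- the integrating factor `exp (-G)` turns `f' = g f + q` into `(f exp (-G))' = q exp (-G) ≥ 0`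
  have hmono : MonotoneOn (fun x => f x * exp (-G x)) (Ici a) := by
    have hderiv : ∀ x, a ≤ x →
        HasDerivAt (fun x => f x * exp (-G x)) (q x * exp (-G x)) x := fun x hx => by
      have := (hf x hx).mul (hG x).neg.exp
      rw [max_eq_left hx] at this
      exact this.congr_deriv (by simp only [Pi.neg_apply]; ring)
    refine monotoneOn_of_hasDerivWithinAt_nonneg (convex_Ici a) (f' := fun x => q x * exp (-G x))
      (fun x hx => (hderiv x hx).continuousAt.continuousWithinAt) (fun x hx => ?_)
      (fun x hx => ?_) <;> rw [interior_Ici] at hx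
    · exact (hderiv x hx.le).hasDerivWithinAt
    · exact mul_nonneg (hq x hx.le) (exp_pos _).le
  have h := hmono self_mem_Ici ht ht
  simp only [G, intervalIntegral.integral_same, neg_zero, exp_zero, mul_one] at h
  rw [← hGt]
  calc f a * exp (G t) ≤ f t * exp (-G t) * exp (G t) := by gcongr
    _ = f t := by rw [mul_assoc, ← exp_add]; simp

theorem tendsto_nhds_of_eventually_le_of_eventually_ge {f : ℝ → ℝ} {l : Filter ℝ} {L : ℝ}
    (hup : ∀ b, L < b → ∀ᶠ t in l, f t ≤ b) (hlow : ∀ a, a < L → ∀ᶠ t in l, a ≤ f t) :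
    Tendsto f l (𝓝 L) := by
  refine tendsto_order.2 ⟨fun a ha => ?_, fun b hb => ?_⟩
  · obtain ⟨c, hac, hcL⟩ := exists_between ha
    exact (hlow c hcL).mono fun t ht => hac.trans_le ht
  · obtain ⟨c, hLc, hcb⟩ := exists_between hb
    exact (hup c hLc).mono fun t ht => ht.trans_lt hcb

namespace IsSol

variable {r m β γ μ cSS cSI cIS cII a : ℝ} {S I : ℝ → ℝ} {t : ℝ}

theorem hasDerivAt_S (hsol : IsSol r m β γ μ cSS cSI cIS cII a S I) (ht : 0 ≤ t) :
    HasDerivAt S ((r - m - cSS * S t - (cSI + β) * I t) * S t + (a * r + γ) * I t) t :=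
  (hsol t ht).1.congr_deriv (by ring)

theorem hasDerivAt_I (hsol : IsSol r m β γ μ cSS cSI cIS cII a S I) (ht : 0 ≤ t) :
    HasDerivAt I (((β - cIS) * S t - cII * I t - (m + γ + μ)) * I t) t :=
  (hsol t ht).2.congr_deriv (by ring)

theorem continuousOn_S (hsol : IsSol r m β γ μ cSS cSI cIS cII a S I) : ContinuousOn S (Ici 0) :=
  fun _ ht => (hsol.hasDerivAt_S ht).continuousAt.continuousWithinAt

theorem continuousOn_I (hsol : IsSol r m β γ μ cSS cSI cIS cII a S I) : ContinuousOn I (Ici 0) :=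
  fun _ ht => (hsol.hasDerivAt_I ht).continuousAt.continuousWithinAt

theorem I_nonneg (hsol : IsSol r m β γ μ cSS cSI cIS cII a S I) (hI₀ : 0 ≤ I 0) (ht : 0 ≤ t) :
    0 ≤ I t := by
  have hg : ContinuousOn (fun s => (β - cIS) * S s - cII * I s - (m + γ + μ)) (Ici 0) := by
    have := hsol.continuousOn_S; have := hsol.continuousOn_I; fun_prop
  exact (mul_nonneg hI₀ (exp_pos _).le).trans <| mul_exp_integral_le_of_hasDerivAt hg
    (q := fun _ => 0) (fun s hs => by simpa using hsol.hasDerivAt_I hs) (fun _ _ => le_rfl) ht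

theorem mul_exp_integral_le_S (hsol : IsSol r m β γ μ cSS cSI cIS cII a S I)
    (hc : 0 ≤ a * r + γ) (hI : ∀ t, 0 ≤ t → 0 ≤ I t) {t₀ : ℝ} (ht₀ : 0 ≤ t₀) (ht : t₀ ≤ t) :
    S t₀ * exp (∫ s in t₀..t, r - m - cSS * S s - (cSI + β) * I s) ≤ S t := by
  have hg : ContinuousOn (fun s => r - m - cSS * S s - (cSI + β) * I s) (Ici t₀) := by
    have := hsol.continuousOn_S.mono (Ici_subset_Ici.2 ht₀)
    have := hsol.continuousOn_I.mono (Ici_subset_Ici.2 ht₀); fun_prop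
  exact mul_exp_integral_le_of_hasDerivAt hg (fun s hs => hsol.hasDerivAt_S (ht₀.trans hs))
    (fun s hs => mul_nonneg hc (hI s (ht₀.trans hs))) ht

theorem exists_S_pos (hsol : IsSol r m β γ μ cSS cSI cIS cII a S I) (hc : 0 < a * r + γ)
    (hS₀ : 0 ≤ S 0) (hI₀ : 0 ≤ I 0) (hne : (S 0, I 0) ≠ (0, 0)) : ∃ t₀, 0 ≤ t₀ ∧ 0 < S t₀ := by
  rcases hS₀.lt_or_eq with hS₀ | hS₀
  · exact ⟨0, le_rfl, hS₀⟩
  -- if `S 0 = 0` then `I 0 > 0`, so `S' 0 > 0` and `S` is positive just after `0`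
  have hI₀ : 0 < I 0 := hI₀.lt_of_ne fun h => hne (by rw [← hS₀, ← h])
  have hslope : Tendsto (slope S 0) (𝓝[>] 0) (𝓝 ((a * r + γ) * I 0)) := by
    have := (hasDerivWithinAt_iff_tendsto_slope' (s := Ioi 0) (lt_irrefl 0)).1
      (hsol.hasDerivAt_S le_rfl).hasDerivWithinAt
    simpa [← hS₀] using this
  obtain ⟨t₀, hslope_pos, ht₀⟩ :=
    ((hslope.eventually (eventually_gt_nhds (mul_pos hc hI₀))).and self_mem_nhdsWithin).exists
  exact ⟨t₀, le_of_lt ht₀, pos_of_slope_pos ht₀ hslope_pos hS₀.symm⟩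

theorem tendsto_I (hsol : IsSol r m β γ μ cSS cSI cIS cII a S I) (hmγμ : 0 < m + γ + μ)
    (hβc : β ≤ cIS) (hcII : 0 ≤ cII) (hS : ∀ t, 0 ≤ t → 0 ≤ S t) (hI : ∀ t, 0 ≤ t → 0 ≤ I t) :
    Tendsto I atTop (𝓝 0) := by
  refine tendsto_nhds_of_eventually_le_of_eventually_ge (fun η hη => ?_)
    (fun b hb => (eventually_ge_atTop 0).mono fun t ht => hb.le.trans (hI t ht))
  refine eventually_le_of_hasDerivAt_le_neg (mul_pos hmγμ hη) (fun t ht => hsol.hasDerivAt_I ht)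
    (fun t ht hηI => ?_)
  have hrate : (β - cIS) * S t - cII * I t - (m + γ + μ) ≤ -(m + γ + μ) := by
    nlinarith [hS t ht, hI t ht]
  nlinarith

theorem eventually_S_le (hsol : IsSol r m β γ μ cSS cSI cIS cII a S I) (hrm : m < r)
    (hcSS : 0 < cSS) (hk : 0 ≤ cSI + β) (hc : 0 ≤ a * r + γ) (hI : ∀ t, 0 ≤ t → 0 ≤ I t)
    (hI_lim : Tendsto I atTop (𝓝 0)) {B : ℝ} (hB : (r - m) / cSS < B) :
    ∀ᶠ t in atTop, S t ≤ B := by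
  have hB₀ : 0 < B := (div_pos (sub_pos.2 hrm) hcSS).trans hB
  set δ := cSS * B - (r - m)
  have hδ : 0 < δ := by rw [div_lt_iff₀ hcSS] at hB; linarith
  set ε := δ * B / (2 * (a * r + γ + 1))
  obtain ⟨T, hT⟩ := eventually_atTop.1 ((hI_lim.eventually
    (eventually_le_nhds (show 0 < ε by positivity))).and (eventually_ge_atTop 0))
  refine eventually_le_of_hasDerivAt_le_neg (κ := δ * B / 2) (by positivity)
    (fun t ht => hsol.hasDerivAt_S (hT t ht).2) (fun t ht hBS => ?_)
  obtain ⟨hIε, ht₀⟩ := hT t ht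
  -- above `B` the logistic term is at most `-δ B` and the inflow `(a r + γ) I` at most `δ B / 2`
  have hlogistic : (r - m - cSS * S t) * S t ≤ -(δ * B) := by
    nlinarith [mul_nonneg (mul_nonneg hcSS.le (sub_nonneg.2 hBS)) (hB₀.le.trans hBS),
      mul_nonneg hδ.le (sub_nonneg.2 hBS)]
  have hinflow : (a * r + γ) * I t ≤ δ * B / 2 := by
    calc (a * r + γ) * I t ≤ (a * r + γ + 1) * ε := by nlinarith [hI t ht₀]
      _ = δ * B / 2 := by simp only [ε]; field_simp
  have hloss : 0 ≤ (cSI + β) * I t * S t :=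
    mul_nonneg (mul_nonneg hk (hI t ht₀)) (hB₀.le.trans hBS)
  linarith

theorem eventually_le_S (hsol : IsSol r m β γ μ cSS cSI cIS cII a S I) (hrm : m < r)
    (hcSS : 0 < cSS) (hk : 0 ≤ cSI + β) (hc : 0 ≤ a * r + γ) (hI : ∀ t, 0 ≤ t → 0 ≤ I t)
    (hI_lim : Tendsto I atTop (𝓝 0)) {t₀ : ℝ} (ht₀ : 0 ≤ t₀) (hS : ∀ t, t₀ ≤ t → 0 < S t)
    {A : ℝ} (hA : A < (r - m) / cSS) : ∀ᶠ t in atTop, A ≤ S t := by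
  have hS₁ : 0 < (r - m) / cSS := div_pos (sub_pos.2 hrm) hcSS
  set A' := max A ((r - m) / cSS / 2)
  have hA'₀ : 0 < A' := lt_max_of_lt_right (by positivity)
  have hA' : A' < (r - m) / cSS := max_lt hA (half_lt_self hS₁)
  set δ := r - m - cSS * A'
  have hδ : 0 < δ := by rw [lt_div_iff₀ hcSS] at hA'; linarith
  set ε := δ / (2 * (cSI + β + 1))
  obtain ⟨T, hT⟩ := eventually_atTop.1 ((hI_lim.eventually
    (eventually_le_nhds (show 0 < ε by positivity))).and (eventually_ge_atTop t₀))
  -- below `A'` the per-capita growth rate `S' / S` is at least `δ - (cSI + β) ε ≥ δ / 2`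
  have hlog : ∀ᶠ t in atTop, -log (S t) ≤ -log A' := by
    refine eventually_le_of_hasDerivAt_le_neg (κ := δ / 2) (by positivity)
      (fun t ht => ((hsol.hasDerivAt_S (ht₀.trans (hT t ht).2)).log (hS t (hT t ht).2).ne').neg)
      (fun t ht hSA => ?_)
    obtain ⟨hIε, htt₀⟩ := hT t ht
    have hSt := hS t htt₀
    have hSA' : S t ≤ A' := (log_le_log_iff hSt hA'₀).1 (neg_le_neg_iff.1 hSA)
    have hkI : (cSI + β) * I t ≤ δ / 2 := by
      calc (cSI + β) * I t ≤ (cSI + β + 1) * ε := by nlinarith [hI t (ht₀.trans htt₀)]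
        _ = δ / 2 := by simp only [ε]; field_simp
    rw [neg_le_neg_iff, le_div_iff₀ hSt]
    nlinarith [mul_nonneg hc (hI t (ht₀.trans htt₀)), mul_le_mul_of_nonneg_left hSA' hcSS.le]
  filter_upwards [hlog, eventually_ge_atTop t₀] with t ht htt₀
  exact (le_max_left _ _).trans ((log_le_log_iff hA'₀ (hS t htt₀)).1 (neg_le_neg_iff.1 ht))

end IsSol

theorem IsEquilibrium.infected_eq_zero {r m β γ μ cSS cSI cIS cII a s i : ℝ}
    (h : IsEquilibrium r m β γ μ cSS cSI cIS cII a s i) (hmγμ : 0 < m + γ + μ) (hβc : β ≤ cIS)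
    (hcII : 0 ≤ cII) (hs : 0 ≤ s) (hi : 0 ≤ i) : i = 0 := by
  have hrate : ((β - cIS) * s - cII * i - (m + γ + μ)) * i = 0 := by linear_combination h.2
  refine (mul_eq_zero.1 hrate).resolve_left (ne_of_lt ?_)
  nlinarith

/-- Proposition 3, part 3: if `β ≤ cIS` the disease-free equilibrium attracts
every nonnegative nonzero solution, and there is no interior equilibrium. -/
theorem prop3_part3_global_disease_free
    (r m β γ μ cSS cSI cIS cII a : ℝ)
    (hp : ParamsPos r m β γ μ cSS cSI cIS cII a)
    (hrm : m < r) (hβc : β ≤ cIS) :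
    (∀ S I : ℝ → ℝ, IsSol r m β γ μ cSS cSI cIS cII a S I →
      0 ≤ S 0 → 0 ≤ I 0 → (S 0, I 0) ≠ ((0 : ℝ), (0 : ℝ)) →
      Tendsto (fun t => (S t, I t)) atTop (𝓝 (((r - m) / cSS, 0) : ℝ × ℝ))) ∧
    (∀ s i : ℝ, 0 < s → 0 < i →
      ¬ IsEquilibrium r m β γ μ cSS cSI cIS cII a s i) := by
  obtain ⟨hr, hm, hβ, hγ, hμ, hcSS, hcSI, -, hcII, ha, -⟩ := hp
  have hc : 0 < a * r + γ := by positivity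
  have hk : 0 ≤ cSI + β := by positivity
  have hmγμ : 0 < m + γ + μ := by positivity
  refine ⟨fun S I hsol hS₀ hI₀ hne => ?_,
    fun s i hs hi h => hi.ne' (h.infected_eq_zero hmγμ hβc hcII.le hs.le hi.le)⟩
  have hI (t : ℝ) (ht : 0 ≤ t) : 0 ≤ I t := hsol.I_nonneg hI₀ ht
  have hS (t : ℝ) (ht : 0 ≤ t) : 0 ≤ S t := by
    simpa using (mul_nonneg hS₀ (exp_pos _).le).trans
      (hsol.mul_exp_integral_le_S hc.le hI le_rfl ht)
  obtain ⟨t₀, ht₀, hSt₀⟩ := hsol.exists_S_pos hc hS₀ hI₀ hne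
  have hS_pos (t : ℝ) (ht : t₀ ≤ t) : 0 < S t :=
    (mul_pos hSt₀ (exp_pos _)).trans_le (hsol.mul_exp_integral_le_S hc.le hI ht₀ ht)
  have hI_lim := hsol.tendsto_I hmγμ hβc hcII.le hS hI
  refine Tendsto.prodMk_nhds ?_ hI_lim
  exact tendsto_nhds_of_eventually_le_of_eventually_ge
    (fun B hB => hsol.eventually_S_le hrm hcSS hk hc.le hI hI_lim hB)
    (fun A hA => hsol.eventually_le_S hrm hcSS hk hc.le hI hI_lim ht₀ hS_pos hA)
end

section
/- (Proposition 5, global attraction) Assume r > m and β > cIS, and set S1 = (r − m)/cSS, A = (m + γ + μ)/(β − cIS), B = (a·r + γ)/(cSI + β). If S1 > A and S1 < B, then the unique interior equilibrium (S₊, I₊) of the reduced system attracts every positive solution: every solution with S(0) > 0 and I(0) > 0 satisfies (S(t), I(t)) → (S₊, I₊) as t → ∞. -/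
/-!
Positive solutions stay positive (integrating factors) and bounded (the competition terms are
quadratic), and they eventually enter the strip `S ≤ (a r + γ) / (cSI + β)`, where the system is
cooperative. There `(S', I')` solves a cooperative linear system, whose closed quadrants are
invariant; as a component of `(S', I')` can only vanish inside such a quadrant, `S'` and `I'` are
eventually of one sign, so the bounded functions `S` and `I` converge. The limit is an
equilibrium. It is not on the boundary: `S1 > A` makes `((r - m) / cSS, 0)` repel in the `I`
direction, and `(0, 0)` repels in the `S` direction. Finally the interior equilibrium is unique,
since it corresponds to the positive root of a quadratic whose roots have a negative product.
-/

open Filter Topology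

open Set

def EventuallyOneSigned (f : ℝ → ℝ) : Prop :=
  (∀ᶠ t in atTop, 0 ≤ f t) ∨ ∀ᶠ t in atTop, f t ≤ 0

lemma monotoneOn_Ici_of_hasDerivAt_nonneg {f f' : ℝ → ℝ} {t₀ : ℝ}
    (hf : ∀ t ≥ t₀, HasDerivAt f (f' t) t) (hf' : ∀ t ≥ t₀, 0 ≤ f' t) :
    MonotoneOn f (Ici t₀) :=
  monotoneOn_of_hasDerivWithinAt_nonneg (convex_Ici t₀)
    (fun t ht => (hf t ht).continuousAt.continuousWithinAt)
    (fun t ht => (hf t (interior_subset ht)).hasDerivWithinAt)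
    (fun t ht => hf' t (interior_subset ht))

/-- With the integrating factor, `f * exp (-∫ g)` is nondecreasing. -/
lemma pos_of_hasDerivAt_ge_mul {f f' g : ℝ → ℝ} {t₀ : ℝ} (hg : ContinuousOn g (Ici t₀))
    (hf : ∀ t ≥ t₀, HasDerivAt f (f' t) t) (hf' : ∀ t ≥ t₀, g t * f t ≤ f' t)
    (h₀ : 0 < f t₀) : ∀ t ≥ t₀, 0 < f t := by
  set G : ℝ → ℝ := fun u => ∫ s in t₀..u, g (max s t₀)
  have hG : ∀ u, HasDerivAt G (g (max u t₀)) u := fun u =>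
    ((hg.comp_continuous (continuous_id.max continuous_const) fun s => le_max_right s t₀)
      |>.integral_hasStrictDerivAt t₀ u).hasDerivAt
  have hmono : MonotoneOn (fun t => f t * Real.exp (-G t)) (Ici t₀) := by
    refine monotoneOn_Ici_of_hasDerivAt_nonneg (fun t ht => (hf t ht).mul (hG t).neg.exp)
      fun t ht => ?_
    rw [max_eq_left ht, Pi.neg_apply]
    linarith [mul_nonneg (sub_nonneg.2 (hf' t ht)) (Real.exp_pos (-G t)).le]
  intro t ht
  have h : f t₀ * Real.exp (-G t₀) ≤ f t * Real.exp (-G t) := hmono self_mem_Ici ht ht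
  exact pos_of_mul_pos_left ((by positivity : 0 < f t₀ * Real.exp (-G t₀)).trans_le h)
    (Real.exp_pos _).le

lemma le_of_hasDerivAt_neg_of_eq {f f' : ℝ → ℝ} {t₀ c : ℝ}
    (hf : ∀ t ≥ t₀, HasDerivAt f (f' t) t) (hc : ∀ t ≥ t₀, f t = c → f' t < 0)
    (h₀ : f t₀ ≤ c) : ∀ t ≥ t₀, f t ≤ c := fun _ ht =>
  image_le_of_deriv_right_lt_deriv_boundary' (B := fun _ => c) (B' := 0)
    (fun s hs => (hf s hs.1).continuousAt.continuousWithinAt)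
    (fun s hs => (hf s hs.1).hasDerivWithinAt) h₀ continuousOn_const
    (fun _ _ => hasDerivWithinAt_const _ _ _) (fun s hs => hc s hs.1) ⟨ht, le_rfl⟩

lemma HasDerivAt.pos_of_eventually_pos_left {f : ℝ → ℝ} {f' x : ℝ} (hf : HasDerivAt f f' x)
    (hpos : ∀ᶠ t in 𝓝[<] x, 0 < f t) (hf' : f x = 0 → 0 < f') : 0 < f x := by
  have hnonneg : 0 ≤ f x := ge_of_tendsto (hf.continuousAt.tendsto.mono_left nhdsWithin_le_nhds)
    (hpos.mono fun _ h => h.le)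
  refine hnonneg.lt_of_ne' fun hx => ?_
  have hslope := (hasDerivAt_iff_tendsto_slope_left_right.1 hf).1.eventually
    (eventually_gt_nhds (hf' hx))
  obtain ⟨t, ht, hft, htx⟩ := (hslope.and (hpos.and self_mem_nhdsWithin)).exists
  exact ((slope_pos_iff_gt htx).1 ht).not_gt (hx ▸ hft)

/-- First exit from the open quadrant: at the first time `τ` where `min u w` vanishes, both
coordinates are still nonnegative, so the hypothesis on the vanishing one contradicts its
positivity just before `τ`. -/
lemma pos_of_hasDerivAt_pos_of_eq_zero {u w u' w' : ℝ → ℝ} {a b : ℝ}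
    (hu : ∀ t ∈ Icc a b, HasDerivAt u (u' t) t) (hw : ∀ t ∈ Icc a b, HasDerivAt w (w' t) t)
    (hua : 0 < u a) (hwa : 0 < w a)
    (hu' : ∀ t ∈ Icc a b, u t = 0 → 0 ≤ w t → 0 < u' t)
    (hw' : ∀ t ∈ Icc a b, w t = 0 → 0 ≤ u t → 0 < w' t) :
    ∀ t ∈ Icc a b, 0 < u t ∧ 0 < w t := by
  set K := {t ∈ Icc a b | min (u t) (w t) ≤ 0}
  by_contra! hbad
  obtain ⟨t, ht, hbad⟩ := hbad
  have hKne : K.Nonempty := ⟨t, ht, (le_or_gt (u t) 0).elim min_le_of_left_le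
    fun h => min_le_of_right_le (hbad h)⟩
  have hK : IsClosed K := by
    have : ContinuousOn (fun t => min (u t) (w t)) (Icc a b) := fun t ht =>
      (ContinuousAt.inf (hu t ht).continuousAt (hw t ht).continuousAt).continuousWithinAt
    exact this.preimage_isClosed_of_isClosed isClosed_Icc isClosed_Iic
  set τ := sInf K
  have hτ : τ ∈ K := hK.csInf_mem hKne ⟨a, fun t ht => ht.1.1⟩
  have haτ : a < τ := hτ.1.1.lt_of_ne fun h => by
    have := hτ.2; rw [← h] at this; exact (lt_min hua hwa).not_ge this
  have hleft : ∀ᶠ t in 𝓝[<] τ, 0 < u t ∧ 0 < w t := by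
    filter_upwards [Ioo_mem_nhdsLT haτ] with t ht
    have htK : t ∉ K := fun h => (csInf_le ⟨a, fun t ht => ht.1.1⟩ h).not_gt ht.2
    have htab : t ∈ Icc a b := ⟨ht.1.le, ht.2.le.trans hτ.1.2⟩
    simpa [K, htab.1, htab.2] using htK
  have hu0 : 0 < u τ := (hu τ hτ.1).pos_of_eventually_pos_left (hleft.mono fun _ h => h.1)
    fun h => hu' τ hτ.1 h (ge_of_tendsto ((hw τ hτ.1).continuousAt.tendsto.mono_left
      nhdsWithin_le_nhds) (hleft.mono fun _ h => h.2.le))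
  have hw0 : 0 < w τ := (hw τ hτ.1).pos_of_eventually_pos_left (hleft.mono fun _ h => h.2)
    fun h => hw' τ hτ.1 h hu0.le
  exact (lt_min hu0 hw0).not_ge hτ.2

lemma eventuallyOneSigned_of_ne_zero {f : ℝ → ℝ} {t₀ : ℝ} (hf : ContinuousOn f (Ici t₀))
    (hne : ∀ t ≥ t₀, f t ≠ 0) : EventuallyOneSigned f := by
  by_contra! h
  simp only [EventuallyOneSigned, not_or, not_eventually, not_le] at h
  obtain ⟨x, hfx, hx⟩ := (h.1.and_eventually (eventually_ge_atTop t₀)).exists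
  obtain ⟨y, hfy, hy⟩ := (h.2.and_eventually (eventually_ge_atTop t₀)).exists
  obtain ⟨z, hz, hfz⟩ := isPreconnected_Ici.intermediate_value hx hy hf ⟨hfx.le, hfy.le⟩
  exact hne z hz hfz

structure IsCooperativeSol (a₁₁ a₁₂ a₂₁ a₂₂ P Q : ℝ → ℝ) (t₀ : ℝ) : Prop where
  continuousOn₁₁ : ContinuousOn a₁₁ (Ici t₀)
  continuousOn₁₂ : ContinuousOn a₁₂ (Ici t₀)
  continuousOn₂₁ : ContinuousOn a₂₁ (Ici t₀)
  continuousOn₂₂ : ContinuousOn a₂₂ (Ici t₀)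
  nonneg₁₂ : ∀ t ≥ t₀, 0 ≤ a₁₂ t
  nonneg₂₁ : ∀ t ≥ t₀, 0 ≤ a₂₁ t
  hasDerivAt_fst : ∀ t ≥ t₀, HasDerivAt P (a₁₁ t * P t + a₁₂ t * Q t) t
  hasDerivAt_snd : ∀ t ≥ t₀, HasDerivAt Q (a₂₁ t * P t + a₂₂ t * Q t) t

namespace IsCooperativeSol

variable {a₁₁ a₁₂ a₂₁ a₂₂ P Q : ℝ → ℝ} {t₀ t₁ : ℝ}

lemma mono (h : IsCooperativeSol a₁₁ a₁₂ a₂₁ a₂₂ P Q t₀) (ht : t₀ ≤ t₁) :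
    IsCooperativeSol a₁₁ a₁₂ a₂₁ a₂₂ P Q t₁ where
  continuousOn₁₁ := h.continuousOn₁₁.mono (Ici_subset_Ici.2 ht)
  continuousOn₁₂ := h.continuousOn₁₂.mono (Ici_subset_Ici.2 ht)
  continuousOn₂₁ := h.continuousOn₂₁.mono (Ici_subset_Ici.2 ht)
  continuousOn₂₂ := h.continuousOn₂₂.mono (Ici_subset_Ici.2 ht)
  nonneg₁₂ t ht' := h.nonneg₁₂ t (ht.trans ht')
  nonneg₂₁ t ht' := h.nonneg₂₁ t (ht.trans ht')
  hasDerivAt_fst t ht' := h.hasDerivAt_fst t (ht.trans ht')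
  hasDerivAt_snd t ht' := h.hasDerivAt_snd t (ht.trans ht')

lemma neg (h : IsCooperativeSol a₁₁ a₁₂ a₂₁ a₂₂ P Q t₀) :
    IsCooperativeSol a₁₁ a₁₂ a₂₁ a₂₂ (-P) (-Q) t₀ where
  __ := h
  hasDerivAt_fst t ht := by
    simpa only [Pi.neg_apply, mul_neg, ← neg_add] using (h.hasDerivAt_fst t ht).neg
  hasDerivAt_snd t ht := by
    simpa only [Pi.neg_apply, mul_neg, ← neg_add] using (h.hasDerivAt_snd t ht).neg

/-- On `[t₀, T]` the coefficients are bounded, so the perturbation `(P + E, Q + E)` with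
`E t = ε exp (K (t - T))` and `K` large points strictly into the open quadrant on its boundary. -/
lemma nonneg (h : IsCooperativeSol a₁₁ a₁₂ a₂₁ a₂₂ P Q t₀) (hP : 0 ≤ P t₀) (hQ : 0 ≤ Q t₀) :
    ∀ t ≥ t₀, 0 ≤ P t ∧ 0 ≤ Q t := by
  intro T hT
  have hcont : ContinuousOn (fun t => max (a₁₁ t + a₁₂ t) (a₂₁ t + a₂₂ t)) (Icc t₀ T) := by
    have := h.continuousOn₁₁; have := h.continuousOn₁₂
    have := h.continuousOn₂₁; have := h.continuousOn₂₂
    exact ContinuousOn.mono (by fun_prop) Icc_subset_Ici_self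
  obtain ⟨C, hC⟩ := isCompact_Icc.exists_bound_of_continuousOn hcont
  have hK : ∀ t ∈ Icc t₀ T, a₁₁ t + a₁₂ t < C + 1 ∧ a₂₁ t + a₂₂ t < C + 1 := fun t ht => by
    have := (le_abs_self _).trans (hC t ht)
    constructor <;> linarith [le_max_left (a₁₁ t + a₁₂ t) (a₂₁ t + a₂₂ t),
      le_max_right (a₁₁ t + a₁₂ t) (a₂₁ t + a₂₂ t)]
  suffices hε : ∀ ε > 0, 0 < P T + ε ∧ 0 < Q T + ε from
    ⟨le_of_forall_pos_lt_add fun ε hε' => (hε ε hε').1,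
      le_of_forall_pos_lt_add fun ε hε' => (hε ε hε').2⟩
  intro ε hε
  set E : ℝ → ℝ := fun t => ε * Real.exp ((C + 1) * (t - T))
  have hE : ∀ t, HasDerivAt E ((C + 1) * E t) t := fun t => by
    refine ((((hasDerivAt_id' t).sub_const T).const_mul (C + 1)).exp.const_mul ε).congr_deriv ?_
    simp only [E]; ring
  have hEpos : ∀ t, 0 < E t := fun t => by positivity
  have hET : E T = ε := by simp [E]
  rw [← hET]
  refine pos_of_hasDerivAt_pos_of_eq_zero (u := P + E) (w := Q + E)
    (fun t ht => (h.hasDerivAt_fst t ht.1).add (hE t))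
    (fun t ht => (h.hasDerivAt_snd t ht.1).add (hE t))
    (by simpa using add_pos_of_nonneg_of_pos hP (hEpos t₀))
    (by simpa using add_pos_of_nonneg_of_pos hQ (hEpos t₀)) ?_ ?_ T ⟨hT, le_rfl⟩
  · intro t ht hu hw
    simp only [Pi.add_apply] at hu hw
    rw [eq_neg_of_add_eq_zero_left hu]
    nlinarith [mul_le_mul_of_nonneg_left (by linarith : -E t ≤ Q t) (h.nonneg₁₂ t ht.1),
      mul_pos (sub_pos.2 (hK t ht).1) (hEpos t)]
  · intro t ht hw hu
    simp only [Pi.add_apply] at hu hw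
    rw [eq_neg_of_add_eq_zero_left hw]
    nlinarith [mul_le_mul_of_nonneg_left (by linarith : -E t ≤ P t) (h.nonneg₂₁ t ht.1),
      mul_pos (sub_pos.2 (hK t ht).2) (hEpos t)]

/-- Either `(P, Q)` enters a closed quadrant `P Q ≥ 0`, which is invariant, or `P` and `Q`
never vanish. -/
lemma eventuallyOneSigned (h : IsCooperativeSol a₁₁ a₁₂ a₂₁ a₂₂ P Q t₀) :
    EventuallyOneSigned P ∧ EventuallyOneSigned Q := by
  by_cases hPQ : ∃ t₁ ≥ t₀, 0 ≤ P t₁ * Q t₁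
  · obtain ⟨t₁, ht₁, hPQ⟩ := hPQ
    rcases mul_nonneg_iff.1 hPQ with ⟨hP, hQ⟩ | ⟨hP, hQ⟩
    · have hnn := (h.mono ht₁).nonneg hP hQ
      exact ⟨.inl (eventually_atTop.2 ⟨t₁, fun t ht => (hnn t ht).1⟩),
        .inl (eventually_atTop.2 ⟨t₁, fun t ht => (hnn t ht).2⟩)⟩
    · have hnn := (h.mono ht₁).neg.nonneg (neg_nonneg.2 hP) (neg_nonneg.2 hQ)
      exact ⟨.inr (eventually_atTop.2 ⟨t₁, fun t ht => neg_nonneg.1 (hnn t ht).1⟩),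
        .inr (eventually_atTop.2 ⟨t₁, fun t ht => neg_nonneg.1 (hnn t ht).2⟩)⟩
  · push Not at hPQ
    exact ⟨eventuallyOneSigned_of_ne_zero
        (fun t ht => (h.hasDerivAt_fst t ht).continuousAt.continuousWithinAt)
        fun t ht => left_ne_zero_of_mul (hPQ t ht).ne,
      eventuallyOneSigned_of_ne_zero
        (fun t ht => (h.hasDerivAt_snd t ht).continuousAt.continuousWithinAt)
        fun t ht => right_ne_zero_of_mul (hPQ t ht).ne⟩

end IsCooperativeSol

lemma exists_tendsto_of_hasDerivAt_of_eventuallyOneSigned {f f' : ℝ → ℝ} {lo hi : ℝ}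
    (hf : ∀ᶠ t in atTop, HasDerivAt f (f' t) t) (hf' : EventuallyOneSigned f')
    (hbdd : ∀ᶠ t in atTop, f t ∈ Icc lo hi) : ∃ l, Tendsto f atTop (𝓝 l) := by
  wlog hnn : ∀ᶠ t in atTop, 0 ≤ f' t generalizing f f' lo hi
  · obtain ⟨l, hl⟩ := this (f := -f) (f' := -f') (lo := -hi) (hi := -lo)
      (hf.mono fun _ h => h.neg) (.inl (by simpa using hf'.resolve_left hnn))
      (hbdd.mono fun _ h => ⟨neg_le_neg h.2, neg_le_neg h.1⟩)
      (by simpa using hf'.resolve_left hnn)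
    exact ⟨-l, by simpa using hl.neg⟩
  obtain ⟨T, hT⟩ := eventually_atTop.1 (hf.and (hnn.and hbdd))
  have hmono : Monotone fun t => f (max t T) := fun s t hst =>
    monotoneOn_Ici_of_hasDerivAt_nonneg (fun t ht => (hT t ht).1) (fun t ht => (hT t ht).2.1)
      (le_max_right s T) (le_max_right t T) (max_le_max_right T hst)
  have hbdd' : BddAbove (range fun t => f (max t T)) :=
    ⟨hi, by rintro _ ⟨t, rfl⟩; exact (hT _ (le_max_right t T)).2.2.2⟩
  refine ⟨_, (tendsto_atTop_ciSup hmono hbdd').congr' ?_⟩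
  filter_upwards [eventually_ge_atTop T] with t ht
  rw [max_eq_left ht]

lemma eq_zero_of_tendsto_of_tendsto_deriv {f f' : ℝ → ℝ} {l c : ℝ}
    (hf : ∀ᶠ t in atTop, HasDerivAt f (f' t) t) (hfl : Tendsto f atTop (𝓝 l))
    (hf' : Tendsto f' atTop (𝓝 c)) : c = 0 := by
  obtain ⟨T, hT⟩ := eventually_atTop.1 hf
  have hmvt : ∀ t ≥ T, ∃ ξ ∈ Ioo t (t + 1), f' ξ = f (t + 1) - f t := fun t ht => by
    obtain ⟨ξ, hξ, hξf⟩ := exists_hasDerivAt_eq_slope f f' (lt_add_one t)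
      (fun s hs => (hT s (ht.trans hs.1)).continuousAt.continuousWithinAt)
      fun s hs => hT s (ht.trans hs.1.le)
    exact ⟨ξ, hξ, by rw [hξf, add_sub_cancel_left, div_one]⟩
  choose! ξ hξ hξf using hmvt
  have hξ_top : Tendsto ξ atTop atTop := tendsto_atTop_mono' _
    (eventually_atTop.2 ⟨T, fun t ht => (hξ t ht).1.le⟩) tendsto_id
  have hdiff : Tendsto (fun t => f (t + 1) - f t) atTop (𝓝 0) := by
    simpa using (hfl.comp (tendsto_atTop_add_const_right _ 1 tendsto_id)).sub hfl
  refine tendsto_nhds_unique (hf'.comp hξ_top) (hdiff.congr' ?_)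
  filter_upwards [eventually_ge_atTop T] with t ht
  exact (hξf t ht).symm

lemma pos_of_tendsto_of_hasDerivAt_ge_mul {f f' g : ℝ → ℝ} {l c : ℝ}
    (hf : ∀ᶠ t in atTop, HasDerivAt f (f' t) t) (hpos : ∀ᶠ t in atTop, 0 < f t)
    (hf' : ∀ᶠ t in atTop, g t * f t ≤ f' t) (hg : Tendsto g atTop (𝓝 c)) (hc : 0 < c)
    (hfl : Tendsto f atTop (𝓝 l)) : 0 < l := by
  obtain ⟨T, hT⟩ := eventually_atTop.1
    (hf.and (hpos.and (hf'.and ((tendsto_order.1 hg).1 0 hc))))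
  have hmono := monotoneOn_Ici_of_hasDerivAt_nonneg (fun t ht => (hT t ht).1)
    fun t ht => (mul_pos (hT t ht).2.2.2 (hT t ht).2.1).le.trans (hT t ht).2.2.1
  refine (hT T le_rfl).2.1.trans_le (ge_of_tendsto hfl ?_)
  filter_upwards [eventually_ge_atTop T] with t ht
  exact hmono self_mem_Ici ht ht

lemma existsUnique_pos_root_of_pos {α b q : ℝ} (hα : 0 < α) (hq : 0 < q) :
    ∃! x, 0 < x ∧ α * x ^ 2 = b * x + q := by
  obtain ⟨x, hx, hxroot⟩ : ∃ x, 0 < x ∧ α * x ^ 2 = b * x + q := by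
    have hsqrt : |b| < √(b ^ 2 + 4 * α * q) := by
      rw [← Real.sqrt_sq_eq_abs]; exact Real.sqrt_lt_sqrt (sq_nonneg b) (by nlinarith)
    refine ⟨(b + √(b ^ 2 + 4 * α * q)) / (2 * α),
      div_pos (by linarith [neg_abs_le b]) (by positivity), ?_⟩
    field_simp
    linear_combination Real.sq_sqrt (by positivity : (0 : ℝ) ≤ b ^ 2 + α * 4 * q)
  refine ⟨x, ⟨hx, hxroot⟩, fun y ⟨hy, hyroot⟩ => ?_⟩
  have hfac : (y - x) * (α * (y + x) - b) = 0 := by linear_combination hyroot - hxroot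
  refine sub_eq_zero.1 ((mul_eq_zero.1 hfac).resolve_right fun h => ?_)
  -- the product of the two roots would be `-q / α < 0`
  nlinarith [mul_pos (mul_pos hα hx) hy]

namespace IsSol

variable {r m β γ μ cSS cSI cIS cII a : ℝ} {S I : ℝ → ℝ}

lemma continuousOn (hsol : IsSol r m β γ μ cSS cSI cIS cII a S I) :
    ContinuousOn S (Ici 0) ∧ ContinuousOn I (Ici 0) :=
  ⟨fun t ht => (hsol t ht).1.continuousAt.continuousWithinAt,
    fun t ht => (hsol t ht).2.continuousAt.continuousWithinAt⟩

/-- Both equations have the form `x' = g x + h` with `h ≥ 0` once `I > 0`. -/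
lemma pos (hp : ParamsPos r m β γ μ cSS cSI cIS cII a)
    (hsol : IsSol r m β γ μ cSS cSI cIS cII a S I) (hS₀ : 0 < S 0) (hI₀ : 0 < I 0) :
    ∀ t ≥ 0, 0 < S t ∧ 0 < I t := by
  obtain ⟨hr, -, -, hγ, -, -, -, -, -, ha, -⟩ := hp
  obtain ⟨hSc, hIc⟩ := hsol.continuousOn
  have hI : ∀ t ≥ 0, 0 < I t :=
    pos_of_hasDerivAt_ge_mul (g := fun t => -m - (cIS * S t + cII * I t) + β * S t - γ - μ)
      (by fun_prop) (fun t ht => (hsol t ht).2) (fun t _ => (by ring : _ = _).le) hI₀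
  have hS : ∀ t ≥ 0, 0 < S t :=
    pos_of_hasDerivAt_ge_mul (g := fun t => r - m - (cSS * S t + cSI * I t) - β * I t)
      (by fun_prop) (fun t ht => (hsol t ht).1)
      (fun t ht => by nlinarith [mul_pos (add_pos (mul_pos ha hr) hγ) (hI t ht)]) hS₀
  exact fun t ht => ⟨hS t ht, hI t ht⟩

/-- The quadratic competition terms dominate `min cᵢⱼ * (S + I)²`, so `S + I` decreases
whenever it exceeds `(r - m) / min cᵢⱼ`. -/
lemma exists_bound (hp : ParamsPos r m β γ μ cSS cSI cIS cII a)
    (hsol : IsSol r m β γ μ cSS cSI cIS cII a S I) (hpos : ∀ t ≥ 0, 0 < S t ∧ 0 < I t) :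
    ∃ M, ∀ t ≥ 0, S t + I t ≤ M := by
  obtain ⟨hr, -, -, -, hμ, hcSS, hcSI, hcIS, hcII, -, ha₁⟩ := hp
  set c := min (min cSS cSI) (min cIS cII)
  have hc : 0 < c := lt_min (lt_min hcSS hcSI) (lt_min hcIS hcII)
  refine ⟨max (S 0 + I 0) ((r - m) / c), le_of_hasDerivAt_neg_of_eq
    (fun t ht => (hsol t ht).1.add (hsol t ht).2) (fun t ht hN => ?_) (le_max_left _ _)⟩
  obtain ⟨hS, hI⟩ := hpos t ht
  have hrm : r - m ≤ c * (S t + I t) := by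
    rw [hN, ← div_le_iff₀' hc]; exact le_max_right _ _
  have hN₀ : 0 < S t + I t := by linarith
  have hquad : c * (S t + I t) ^ 2 ≤
      (cSS * S t + cSI * I t) * S t + (cIS * S t + cII * I t) * I t := by
    have h₁ : c ≤ cSS := (min_le_left _ _).trans (min_le_left _ _)
    have h₂ : c ≤ cSI := (min_le_left _ _).trans (min_le_right _ _)
    have h₃ : c ≤ cIS := (min_le_right _ _).trans (min_le_left _ _)
    have h₄ : c ≤ cII := (min_le_right _ _).trans (min_le_right _ _)
    have hSI := (mul_pos hS hI).le
    nlinarith [mul_nonneg (sub_nonneg.2 h₁) (sq_nonneg (S t)),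
      mul_nonneg (sub_nonneg.2 h₄) (sq_nonneg (I t)), mul_nonneg (sub_nonneg.2 h₂) hSI,
      mul_nonneg (sub_nonneg.2 h₃) hSI]
  nlinarith [mul_le_mul_of_nonneg_right hrm hN₀.le, mul_lt_mul_of_pos_right ha₁ hr,
    mul_pos hμ hI]

/-- Above `B = (a r + γ) / (cSI + β)` the infection term of `S'` is nonpositive and the logistic
term is at most `-δ < 0`, because `B > (r - m) / cSS`. -/
lemma eventually_le (hp : ParamsPos r m β γ μ cSS cSI cIS cII a)
    (hSB : (r - m) / cSS < (a * r + γ) / (cSI + β))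
    (hsol : IsSol r m β γ μ cSS cSI cIS cII a S I) (hpos : ∀ t ≥ 0, 0 < S t ∧ 0 < I t) :
    ∃ T ≥ 0, ∀ t ≥ T, S t ≤ (a * r + γ) / (cSI + β) := by
  obtain ⟨hr, -, hβ, hγ, -, hcSS, hcSI, -, -, ha, -⟩ := hp
  set B := (a * r + γ) / (cSI + β)
  have hB : (cSI + β) * B = a * r + γ := mul_div_cancel₀ _ (by positivity)
  have hB₀ : 0 < B := by positivity
  have hrmB : r - m < cSS * B := by rw [mul_comm]; exact (div_lt_iff₀ hcSS).1 hSB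
  set δ := B * (cSS * B - (r - m))
  have hδ : 0 < δ := mul_pos hB₀ (by linarith)
  have hdec : ∀ t ≥ 0, B ≤ S t → r * S t + a * r * I t - m * S t
      - (cSS * S t + cSI * I t) * S t - β * S t * I t + γ * I t ≤ -δ := fun t ht hBS => by
    have hI := (hpos t ht).2
    nlinarith [mul_le_mul_of_nonneg_left hBS (by positivity : (0 : ℝ) ≤ cSI + β),
      mul_le_mul_of_nonneg_left hBS (by linarith : (0 : ℝ) ≤ cSS * B - (r - m)),
      mul_le_mul_of_nonneg_left hBS (mul_nonneg hcSS.le (hB₀.le.trans hBS))]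
  obtain ⟨T, hT, hST⟩ : ∃ T ≥ 0, S T ≤ B := by
    by_contra! h
    have hmono := monotoneOn_Ici_of_hasDerivAt_nonneg (f := fun t => -S t - δ * t)
      (fun t ht => (hsol t ht).1.neg.sub ((hasDerivAt_id' t).const_mul δ))
      fun t ht => by linarith [hdec t ht (h t ht).le]
    have hτ : 0 ≤ S 0 / δ := (div_pos (hpos 0 le_rfl).1 hδ).le
    have := hmono self_mem_Ici hτ hτ
    simp only [mul_zero, sub_zero, mul_div_cancel₀ _ hδ.ne'] at this
    linarith [(hpos _ hτ).1]
  exact ⟨T, hT, le_of_hasDerivAt_neg_of_eq (fun t ht => (hsol t (hT.trans ht)).1)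
    (fun t ht hSt => by linarith [hdec t (hT.trans ht) hSt.ge]) hST⟩

/-- `(S', I')` solves the variational equation along the solution, whose matrix is the Jacobian
of the vector field; it is cooperative while `S ≤ (a r + γ) / (cSI + β)`. -/
lemma isCooperativeSol_deriv (hp : ParamsPos r m β γ μ cSS cSI cIS cII a) (hβc : cIS < β)
    (hsol : IsSol r m β γ μ cSS cSI cIS cII a S I) (hpos : ∀ t ≥ 0, 0 < S t ∧ 0 < I t)
    {T : ℝ} (hT : 0 ≤ T) (hST : ∀ t ≥ T, S t ≤ (a * r + γ) / (cSI + β)) :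
    IsCooperativeSol (fun t => r - m - 2 * cSS * S t - cSI * I t - β * I t)
      (fun t => a * r + γ - (cSI + β) * S t) (fun t => (β - cIS) * I t)
      (fun t => -m - cIS * S t - 2 * cII * I t + β * S t - γ - μ)
      (fun t => r * S t + a * r * I t - m * S t - (cSS * S t + cSI * I t) * S t
        - β * S t * I t + γ * I t)
      (fun t => -(m * I t) - (cIS * S t + cII * I t) * I t + β * S t * I t - γ * I t - μ * I t)
      T := by
  obtain ⟨-, -, hβ, -, -, -, hcSI, -, -, -, -⟩ := hp
  obtain ⟨hSc, hIc⟩ := hsol.continuousOn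
  replace hSc := hSc.mono (Ici_subset_Ici.2 hT)
  replace hIc := hIc.mono (Ici_subset_Ici.2 hT)
  refine ⟨by fun_prop, by fun_prop, by fun_prop, by fun_prop, fun t ht => ?_,
    fun t ht => mul_nonneg (sub_nonneg.2 hβc.le) (hpos t (hT.trans ht)).2.le,
    fun t ht => ?_, fun t ht => ?_⟩
  · rw [sub_nonneg, ← le_div_iff₀' (add_pos hcSI hβ)]
    exact hST t ht
  · obtain ⟨hS, hI⟩ := hsol t (hT.trans ht)
    exact (((((hS.const_mul r).add (hI.const_mul (a * r))).sub (hS.const_mul m)).sub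
      (((hS.const_mul cSS).add (hI.const_mul cSI)).mul hS)).sub
      ((hS.const_mul β).mul hI)).add (hI.const_mul γ) |>.congr_deriv
      (by simp only [Pi.add_apply]; ring)
  · obtain ⟨hS, hI⟩ := hsol t (hT.trans ht)
    exact (((((hI.const_mul m).neg).sub
      (((hS.const_mul cIS).add (hI.const_mul cII)).mul hI)).add
      ((hS.const_mul β).mul hI)).sub (hI.const_mul γ)).sub (hI.const_mul μ) |>.congr_deriv
      (by simp only [Pi.add_apply]; ring)

lemma exists_tendsto (hp : ParamsPos r m β γ μ cSS cSI cIS cII a) (hβc : cIS < β)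
    (hSB : (r - m) / cSS < (a * r + γ) / (cSI + β))
    (hsol : IsSol r m β γ μ cSS cSI cIS cII a S I) (hpos : ∀ t ≥ 0, 0 < S t ∧ 0 < I t) :
    ∃ s i, Tendsto S atTop (𝓝 s) ∧ Tendsto I atTop (𝓝 i) := by
  obtain ⟨T, hT, hST⟩ := hsol.eventually_le hp hSB hpos
  obtain ⟨M, hM⟩ := hsol.exists_bound hp hpos
  obtain ⟨hS', hI'⟩ := (hsol.isCooperativeSol_deriv hp hβc hpos hT hST).eventuallyOneSigned
  have hev := eventually_ge_atTop (0 : ℝ)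
  obtain ⟨s, hs⟩ := exists_tendsto_of_hasDerivAt_of_eventuallyOneSigned (lo := 0) (hi := M)
    (hev.mono fun t ht => (hsol t ht).1) hS'
    (hev.mono fun t ht => ⟨(hpos t ht).1.le, by linarith [hM t ht, (hpos t ht).2]⟩)
  obtain ⟨i, hi⟩ := exists_tendsto_of_hasDerivAt_of_eventuallyOneSigned (lo := 0) (hi := M)
    (hev.mono fun t ht => (hsol t ht).2) hI'
    (hev.mono fun t ht => ⟨(hpos t ht).2.le, by linarith [hM t ht, (hpos t ht).1]⟩)
  exact ⟨s, i, hs, hi⟩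

lemma isEquilibrium_of_tendsto (hsol : IsSol r m β γ μ cSS cSI cIS cII a S I) {s i : ℝ}
    (hS : Tendsto S atTop (𝓝 s)) (hI : Tendsto I atTop (𝓝 i)) :
    IsEquilibrium r m β γ μ cSS cSI cIS cII a s i := by
  have hev := eventually_ge_atTop (0 : ℝ)
  have hSI := hS.prodMk_nhds hI
  refine ⟨eq_zero_of_tendsto_of_tendsto_deriv (hev.mono fun t ht => (hsol t ht).1) hS ?_,
    eq_zero_of_tendsto_of_tendsto_deriv (hev.mono fun t ht => (hsol t ht).2) hI ?_⟩
  · have hF : Continuous fun p : ℝ × ℝ => r * p.1 + a * r * p.2 - m * p.1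
        - (cSS * p.1 + cSI * p.2) * p.1 - β * p.1 * p.2 + γ * p.2 := by fun_prop
    exact ((hF.tendsto (s, i)).comp hSI :)
  · have hG : Continuous fun p : ℝ × ℝ => -(m * p.2) - (cIS * p.1 + cII * p.2) * p.2
        + β * p.1 * p.2 - γ * p.2 - μ * p.2 := by fun_prop
    exact ((hG.tendsto (s, i)).comp hSI :)

/-- The boundary equilibria repel: near `(0, 0)` the growth rate of `S` tends to `r - m > 0`,
and near `((r - m) / cSS, 0)` that of `I` tends to `(β - cIS) (r - m) / cSS - (m + γ + μ) > 0`. -/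
lemma pos_of_tendsto (hp : ParamsPos r m β γ μ cSS cSI cIS cII a) (hrm : m < r)
    (hβc : cIS < β) (hSA : (m + γ + μ) / (β - cIS) < (r - m) / cSS)
    (hsol : IsSol r m β γ μ cSS cSI cIS cII a S I) (hpos : ∀ t ≥ 0, 0 < S t ∧ 0 < I t)
    {s i : ℝ} (hS : Tendsto S atTop (𝓝 s)) (hI : Tendsto I atTop (𝓝 i)) :
    0 < s ∧ 0 < i := by
  obtain ⟨hr, -, -, hγ, -, hcSS, -, -, -, ha, -⟩ := hp
  have hpos' : ∀ᶠ t in atTop, 0 < S t ∧ 0 < I t :=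
    (eventually_ge_atTop 0).mono fun t ht => hpos t ht
  have heqS := (hsol.isEquilibrium_of_tendsto hS hI).1
  have hi₀ : 0 ≤ i := ge_of_tendsto hI (hpos'.mono fun _ h => h.2.le)
  have hs : 0 < s := by
    refine (ge_of_tendsto hS (hpos'.mono fun _ h => h.1.le)).lt_of_ne' fun hs => ?_
    have hi : i = 0 := by
      subst hs
      have : (a * r + γ) * i = 0 := by linear_combination heqS
      exact (mul_eq_zero.1 this).resolve_left (by positivity)
    subst hs hi
    refine (pos_of_tendsto_of_hasDerivAt_ge_mul
      ((eventually_ge_atTop 0).mono fun t ht => (hsol t ht).1) (hpos'.mono fun _ h => h.1)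
      (hpos'.mono fun t h => ?_) (((tendsto_const_nhds (x := r - m)).sub
        ((hS.const_mul cSS).add (hI.const_mul cSI))).sub (hI.const_mul β)) ?_ hS).ne' rfl
    · nlinarith [mul_pos (add_pos (mul_pos ha hr) hγ) h.2]
    · linarith
  refine ⟨hs, hi₀.lt_of_ne' fun hi => ?_⟩
  subst hi
  have hsS₁ : cSS * s = r - m := by
    have : s * (r - m - cSS * s) = 0 := by linear_combination heqS
    linarith [(mul_eq_zero.1 this).resolve_left hs.ne']
  refine (pos_of_tendsto_of_hasDerivAt_ge_mul
    ((eventually_ge_atTop 0).mono fun t ht => (hsol t ht).2) (hpos'.mono fun _ h => h.2)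
    (Eventually.of_forall fun t => (by ring : _ = _).le) (((((tendsto_const_nhds (x := -m)).sub
      ((hS.const_mul cIS).add (hI.const_mul cII))).add (hS.const_mul β)).sub
      (tendsto_const_nhds (x := γ))).sub (tendsto_const_nhds (x := μ))) ?_ hI).ne' rfl
  rw [div_lt_iff₀ (sub_pos.2 hβc), ← hsS₁, mul_div_cancel_left₀ _ hcSS.ne'] at hSA
  linarith

lemma exists_tendsto_interior_equilibrium (hp : ParamsPos r m β γ μ cSS cSI cIS cII a)
    (hrm : m < r) (hβc : cIS < β) (hSA : (m + γ + μ) / (β - cIS) < (r - m) / cSS)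
    (hSB : (r - m) / cSS < (a * r + γ) / (cSI + β))
    (hsol : IsSol r m β γ μ cSS cSI cIS cII a S I) (hS₀ : 0 < S 0) (hI₀ : 0 < I 0) :
    ∃ s i, 0 < s ∧ 0 < i ∧ IsEquilibrium r m β γ μ cSS cSI cIS cII a s i ∧
      Tendsto (fun t => (S t, I t)) atTop (𝓝 (s, i)) := by
  have hpos := hsol.pos hp hS₀ hI₀
  obtain ⟨s, i, hS, hI⟩ := hsol.exists_tendsto hp hβc hSB hpos
  obtain ⟨hs, hi⟩ := hsol.pos_of_tendsto hp hrm hβc hSA hpos hS hI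
  exact ⟨s, i, hs, hi, hsol.isEquilibrium_of_tendsto hS hI, hS.prodMk_nhds hI⟩

end IsSol

/-- For `i > 0` the second equation gives `(β - cIS) s = m + γ + μ + cII i`; substituting into
the first leaves a quadratic in `i` whose constant term is positive exactly when `hSA` holds. -/
lemma existsUnique_interior_equilibrium {r m β γ μ cSS cSI cIS cII a : ℝ}
    (hp : ParamsPos r m β γ μ cSS cSI cIS cII a) (hβc : cIS < β)
    (hSA : (m + γ + μ) / (β - cIS) < (r - m) / cSS) :
    ∃! p : ℝ × ℝ, 0 < p.1 ∧ 0 < p.2 ∧ IsEquilibrium r m β γ μ cSS cSI cIS cII a p.1 p.2 := by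
  obtain ⟨-, hm, hβ, hγ, hμ, hcSS, hcSI, -, hcII, -, -⟩ := hp
  set e := β - cIS
  set M := m + γ + μ
  have he : 0 < e := sub_pos.2 hβc
  have hq : 0 < (r - m) * e * M - cSS * M ^ 2 := by
    have := (div_lt_div_iff₀ he hcSS).1 hSA
    nlinarith [mul_pos hm hcSS]
  have hα : 0 < cSS * cII ^ 2 + (cSI + β) * e * cII := by positivity
  obtain ⟨i, ⟨hi, hroot⟩, huniq⟩ := existsUnique_pos_root_of_pos
    (b := (r - m) * e * cII - 2 * cSS * M * cII - (cSI + β) * e * M + (a * r + γ) * e ^ 2) hα hq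
  have hlin : ∀ s i : ℝ, 0 < i → IsEquilibrium r m β γ μ cSS cSI cIS cII a s i →
      e * s = M + cII * i := fun s i hi heq => by
    have : i * (e * s - (M + cII * i)) = 0 := by linear_combination heq.2
    linarith [(mul_eq_zero.1 this).resolve_left hi.ne']
  set s := (M + cII * i) / e
  have hs : e * s = M + cII * i := mul_div_cancel₀ _ he.ne'
  refine ⟨(s, i), ⟨by positivity, hi, ?_, by linear_combination i * hs⟩,
    fun ⟨s', i'⟩ ⟨_, hi', heq⟩ => ?_⟩
  · have h : e ^ 2 * (r * s + a * r * i - m * s - (cSS * s + cSI * i) * s - β * s * i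
        + γ * i) = 0 := by
      linear_combination -hroot + ((r - m) * e - cSS * (e * s + (M + cII * i))
        - (cSI + β) * e * i) * hs
    exact (mul_eq_zero.1 h).resolve_left (by positivity)
  · have hs' := hlin s' i' hi' heq
    obtain rfl : i' = i := huniq i' ⟨hi', by linear_combination -(e ^ 2) * heq.1
      + ((r - m) * e - cSS * (e * s' + (M + cII * i')) - (cSI + β) * e * i') * hs'⟩
    exact Prod.ext (mul_left_cancel₀ he.ne' (hs'.trans hs.symm)) rfl

/-- Proposition 5 (global attraction): if `A < S1 < B` the unique interior
equilibrium attracts every positive solution. -/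
theorem prop5_global_attraction
    (r m β γ μ cSS cSI cIS cII a : ℝ)
    (hp : ParamsPos r m β γ μ cSS cSI cIS cII a)
    (hrm : m < r) (hβc : cIS < β)
    (hSA : (m + γ + μ) / (β - cIS) < (r - m) / cSS)
    (hSB : (r - m) / cSS < (a * r + γ) / (cSI + β)) :
    ∃ Sp Ip : ℝ, 0 < Sp ∧ 0 < Ip ∧
      IsEquilibrium r m β γ μ cSS cSI cIS cII a Sp Ip ∧
      (∀ s i : ℝ, 0 < s → 0 < i →
        IsEquilibrium r m β γ μ cSS cSI cIS cII a s i → s = Sp ∧ i = Ip) ∧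
      (∀ S I : ℝ → ℝ, IsSol r m β γ μ cSS cSI cIS cII a S I →
        0 < S 0 → 0 < I 0 →
        Tendsto (fun t => (S t, I t)) atTop (𝓝 ((Sp, Ip) : ℝ × ℝ))) := by
  obtain ⟨⟨Sp, Ip⟩, ⟨hSp, hIp, heq⟩, huniq⟩ := existsUnique_interior_equilibrium hp hβc hSA
  have huniq' : ∀ s i, 0 < s → 0 < i → IsEquilibrium r m β γ μ cSS cSI cIS cII a s i →
      s = Sp ∧ i = Ip := fun s i hs hi h => Prod.ext_iff.1 (huniq (s, i) ⟨hs, hi, h⟩)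
  refine ⟨Sp, Ip, hSp, hIp, heq, huniq', fun S I hsol hS₀ hI₀ => ?_⟩
  obtain ⟨s, i, hs, hi, hsi, hlim⟩ :=
    hsol.exists_tendsto_interior_equilibrium hp hrm hβc hSA hSB hS₀ hI₀
  obtain ⟨rfl, rfl⟩ := huniq' s i hs hi hsi
  exact hlim
end
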